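/- Let (X,d) be a compact metric space, f_{1,∞} an NDS on X, ψ ∈ C(X,ℝ), μ a Borel probability measure on X, Z ⊆ X, and s ∈ ℝ. If P_μ(x,ψ) ≤ s for every x ∈ Z, then P^B_{f_{1,∞}}(Z,ψ) ≤ s and P^W_{f_{1,∞}}(Z,ψ) ≤ s. -/

import Mathlib

open Filter MeasureTheory Set ENNReal

noncomputable section

variable {X : Type} [MetricSpace X]

/-- The iterate `f_1^n = f_n ∘ ⋯ ∘ f_1` of the NDS `f`, where `f 0` is the first map `f_1`. -/
def nIter (f : ℕ → X → X) : ℕ → X → X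
  | 0 => id
  | n + 1 => f n ∘ nIter f n

/-- The Bowen (dynamical) ball `B_n(x, ε)` for the Bowen metric
`d_n(x,y) = max_{0 ≤ j < n} d(f_1^j x, f_1^j y)`. -/
def bowenBall (f : ℕ → X → X) (n : ℕ) (x : X) (ε : ℝ) : Set X :=
  {y | ∀ j < n, dist (nIter f j x) (nIter f j y) < ε}

/-- The Birkhoff sum `S_{1,n} ψ (x) = ∑_{j=0}^{n-1} ψ(f_1^j x)`. -/
def birkSum (f : ℕ → X → X) (ψ : X → ℝ) (n : ℕ) (x : X) : ℝ :=
  ∑ j ∈ Finset.range n, ψ (nIter f j x)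

/-- `S_{1,n} ψ (x, ε) = sup_{y ∈ B_n(x,ε)} S_{1,n} ψ (y)`. -/
def birkSupBall (f : ℕ → X → X) (ψ : X → ℝ) (n : ℕ) (x : X) (ε : ℝ) : ℝ :=
  sSup (birkSum f ψ n '' bowenBall f n x ε)

/-- `M(n, α, ε, Z, ψ)`: infimum of `∑_i exp(-α n_i + S_{1,n_i}ψ(x_i, ε))` over all finite or
countable covers `Z ⊆ ⋃_i B_{n_i}(x_i, ε)` with `n_i ≥ n`. -/
def Mpre (f : ℕ → X → X) (ψ : X → ℝ) (Z : Set X) (n : ℕ) (α ε : ℝ) : ℝ≥0∞ :=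
  sInf { S : ℝ≥0∞ | ∃ (u : Set ℕ) (c : ℕ → X) (m : ℕ → ℕ),
    (∀ i ∈ u, n ≤ m i) ∧ (Z ⊆ ⋃ i ∈ u, bowenBall f (m i) (c i) ε) ∧
    S = ∑' i : u, ENNReal.ofReal (Real.exp (-α * (m i : ℝ) + birkSupBall f ψ (m i) (c i) ε)) }

/-- `𝓜(n, α, ε, Z, ψ)`: as `Mpre` but with the Birkhoff sums evaluated at the centers. -/
def MpreC (f : ℕ → X → X) (ψ : X → ℝ) (Z : Set X) (n : ℕ) (α ε : ℝ) : ℝ≥0∞ :=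
  sInf { S : ℝ≥0∞ | ∃ (u : Set ℕ) (c : ℕ → X) (m : ℕ → ℕ),
    (∀ i ∈ u, n ≤ m i) ∧ (Z ⊆ ⋃ i ∈ u, bowenBall f (m i) (c i) ε) ∧
    S = ∑' i : u, ENNReal.ofReal (Real.exp (-α * (m i : ℝ) + birkSum f ψ (m i) (c i))) }

/-- `M(α, ε, Z, ψ) = lim_{n→∞} M(n, α, ε, Z, ψ)`; the quantity is nondecreasing in `n`,
so the limit is the supremum. -/
def Mlim (f : ℕ → X → X) (ψ : X → ℝ) (Z : Set X) (α ε : ℝ) : ℝ≥0∞ :=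
  ⨆ n : ℕ, Mpre f ψ Z n α ε

/-- `𝓜(α, ε, Z, ψ) = lim_{n→∞} 𝓜(n, α, ε, Z, ψ)`. -/
def MlimC (f : ℕ → X → X) (ψ : X → ℝ) (Z : Set X) (α ε : ℝ) : ℝ≥0∞ :=
  ⨆ n : ℕ, MpreC f ψ Z n α ε

/-- `P^B(ε, Z, ψ) = inf {α : M(α, ε, Z, ψ) = 0}`, as an extended real. -/
def PBeps (f : ℕ → X → X) (ψ : X → ℝ) (Z : Set X) (ε : ℝ) : EReal :=
  sInf (Real.toEReal '' {α : ℝ | Mlim f ψ Z α ε = 0})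

/-- `𝒫^B(ε, Z, ψ) = inf {α : 𝓜(α, ε, Z, ψ) = 0}`. -/
def PBCeps (f : ℕ → X → X) (ψ : X → ℝ) (Z : Set X) (ε : ℝ) : EReal :=
  sInf (Real.toEReal '' {α : ℝ | MlimC f ψ Z α ε = 0})

/-- The Pesin–Pitskel topological pressure `P^B_{f_{1,∞}}(Z, ψ) = lim_{ε→0} P^B(ε, Z, ψ)`. -/
def PB (f : ℕ → X → X) (ψ : X → ℝ) (Z : Set X) : EReal :=
  limUnder (nhdsWithin 0 (Ioi 0)) fun ε : ℝ => PBeps f ψ Z ε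

/-- `W(n, α, ε, Z, ψ)`: the weighted analogue of `Mpre`. -/
def Wpre (f : ℕ → X → X) (ψ : X → ℝ) (Z : Set X) (n : ℕ) (α ε : ℝ) : ℝ≥0∞ :=
  sInf { S : ℝ≥0∞ | ∃ (u : Set ℕ) (cx : ℕ → X) (m : ℕ → ℕ) (c : ℕ → ℝ),
    (∀ i ∈ u, 0 < c i) ∧ (∀ i ∈ u, n ≤ m i) ∧
    (∀ z ∈ Z, 1 ≤ ∑' i : u,
      (bowenBall f (m i) (cx i) ε).indicator (fun _ => ENNReal.ofReal (c i)) z) ∧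
    S = ∑' i : u, ENNReal.ofReal (c i) *
      ENNReal.ofReal (Real.exp (-α * (m i : ℝ) + birkSupBall f ψ (m i) (cx i) ε)) }

/-- `W(α, ε, Z, ψ) = lim_{n→∞} W(n, α, ε, Z, ψ)`. -/
def Wlim (f : ℕ → X → X) (ψ : X → ℝ) (Z : Set X) (α ε : ℝ) : ℝ≥0∞ :=
  ⨆ n : ℕ, Wpre f ψ Z n α ε

/-- `P^W(ε, Z, ψ)`: the critical value of `α` at which `W(α, ε, Z, ψ)` jumps from `∞` to `0`. -/
def PWeps (f : ℕ → X → X) (ψ : X → ℝ) (Z : Set X) (ε : ℝ) : EReal :=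
  sInf (Real.toEReal '' {α : ℝ | Wlim f ψ Z α ε = 0})

/-- The weighted topological pressure `P^W_{f_{1,∞}}(Z, ψ) = lim_{ε→0} P^W(ε, Z, ψ)`. -/
def PW (f : ℕ → X → X) (ψ : X → ℝ) (Z : Set X) : EReal :=
  limUnder (nhdsWithin 0 (Ioi 0)) fun ε : ℝ => PWeps f ψ Z ε

/-- Bowen topological entropy `h^B_top(f_{1,∞}, Z)`, i.e. pressure of the zero potential. -/
def hBtop (f : ℕ → X → X) (Z : Set X) : EReal := PB f (fun _ => 0) Z

/-- Weighted Bowen topological entropy `h^{WB}_top(f_{1,∞}, Z)`. -/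
def hWBtop (f : ℕ → X → X) (Z : Set X) : EReal := PW f (fun _ => 0) Z

/-- `EReal → ℝ≥0∞`, sending `⊤` to `⊤` and everything negative to `0`. -/
def ERealToENNReal (x : EReal) : ℝ≥0∞ := if x = ⊤ then ⊤ else ENNReal.ofReal x.toReal

variable [MeasurableSpace X]

/-- The measure-theoretic local pressure
`P_μ(x,ψ) = lim_{ε→0} liminf_{n→∞} (-log μ(B_n(x,ε)) + S_{1,n}ψ(x))/n`. -/
def Ploc (f : ℕ → X → X) (μ : Measure X) (ψ : X → ℝ) (x : X) : EReal :=
  limUnder (nhdsWithin 0 (Ioi 0)) fun ε : ℝ =>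
    Filter.atTop.liminf fun n : ℕ =>
      (((n : ℝ)⁻¹ : ℝ) : EReal) *
        (-(ENNReal.log (μ (bowenBall f n x ε))) + ((birkSum f ψ n x : ℝ) : EReal))

/-- The integral of an extended-real-valued function: the difference of the lower integrals of
its positive and negative parts. -/
def ERealIntegral (μ : Measure X) (g : X → EReal) : EReal :=
  ((∫⁻ x, ERealToENNReal (g x) ∂μ : ℝ≥0∞) : EReal)
    - ((∫⁻ x, ERealToENNReal (-(g x)) ∂μ : ℝ≥0∞) : EReal)

/-- The measure-theoretic pressure `P_μ(X, ψ) = ∫ P_μ(x, ψ) dμ(x)`. -/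
def Pmeas (f : ℕ → X → X) (μ : Measure X) (ψ : X → ℝ) : EReal :=
  ERealIntegral μ (Ploc f μ ψ)

/-- The measure-theoretic local lower entropy `h̲_μ(f_{1,∞}, x)`. -/
def hloc (f : ℕ → X → X) (μ : Measure X) (x : X) : EReal := Ploc f μ (fun _ => 0) x

/-- The measure-theoretic lower entropy `h̲_μ(f_{1,∞}) = ∫ h̲_μ(f_{1,∞}, x) dμ(x)`. -/
def hmeas (f : ℕ → X → X) (μ : Measure X) : EReal := Pmeas f μ (fun _ => 0)

/-! If `P_μ(x,ψ) ≤ s` on `Z`, then for every `δ > 0` each `x ∈ Z` has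
`μ(B_n(x,ε)) ≥ exp(S_{1,n}ψ(x) - (s+δ)n)` for infinitely many `n`. For fixed `n`, a Vitali
selection among such points gives countably many disjoint balls `B_n(x,ε)` whose doubles cover
them, and disjointness bounds `∑ exp(S_{1,n}ψ(x) - (s+δ)n)` by `μ(X) = 1`. Collecting all
`n ≥ N` gives covers of `Z` by balls `B_n(x,2ε)` of cost at most `∑_{n ≥ N} e^{-δn}`, so the
pressure with Birkhoff sums at the centres, `PBCeps f ψ Z (2ε)`, is at most `s + 2δ`. By uniform
continuity of `ψ`, `P^B(ε)` and `P^W(ε)` differ from their centred versions, which are monotone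
in `ε`, by `o(1)` as `ε → 0`; this shows that the limits exist, and `W ≤ M` handles `P^W`. -/

open Topology

section Dynamics

-- A fresh `X`: the ambient one carries `[MeasurableSpace X]`, which these lemmas do not need.
variable {X : Type} {f : ℕ → X → X} {ψ : X → ℝ}

lemma bddAbove_birkSum_image (hψ : BddAbove (range ψ)) (n : ℕ) (s : Set X) :
    BddAbove (birkSum f ψ n '' s) := by
  obtain ⟨C, hC⟩ := hψ
  refine ⟨n * C, ?_⟩
  rintro _ ⟨y, -, rfl⟩
  calc birkSum f ψ n y ≤ ∑ _j ∈ Finset.range n, C :=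
        Finset.sum_le_sum fun j _ => hC ⟨_, rfl⟩
    _ = n * C := by simp

variable [MetricSpace X]

lemma continuous_nIter (hf : ∀ n, Continuous (f n)) (n : ℕ) : Continuous (nIter f n) := by
  induction n with
  | zero => exact continuous_id
  | succ n ih => exact (hf n).comp ih

lemma isOpen_bowenBall (hf : ∀ n, Continuous (f n)) (n : ℕ) (x : X) (ε : ℝ) :
    IsOpen (bowenBall f n x ε) := by
  have : bowenBall f n x ε = ⋂ j ∈ Finset.range n, {y | dist (nIter f j x) (nIter f j y) < ε} := by
    ext y
    simp [bowenBall]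
  rw [this]
  exact isOpen_biInter_finset fun j _ =>
    isOpen_lt (continuous_const.dist (continuous_nIter hf j)) continuous_const

lemma mem_bowenBall_self {n : ℕ} {x : X} {ε : ℝ} (hε : 0 < ε) : x ∈ bowenBall f n x ε :=
  fun _ _ => by simpa using hε

lemma bowenBall_mono {n : ℕ} {x : X} {ε ε' : ℝ} (h : ε ≤ ε') :
    bowenBall f n x ε ⊆ bowenBall f n x ε' :=
  fun _ hy j hj => (hy j hj).trans_le h

lemma mem_bowenBall_two_mul_of_mem_of_mem {n : ℕ} {x y z : X} {ε : ℝ}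
    (hx : z ∈ bowenBall f n x ε) (hy : z ∈ bowenBall f n y ε) : x ∈ bowenBall f n y (2 * ε) :=
  fun j hj => calc
    dist (nIter f j y) (nIter f j x)
        ≤ dist (nIter f j y) (nIter f j z) + dist (nIter f j x) (nIter f j z) :=
      dist_triangle_right _ _ _
    _ < ε + ε := add_lt_add (hy j hj) (hx j hj)
    _ = 2 * ε := by ring

lemma birkSum_le_birkSupBall (hψ : BddAbove (range ψ)) {n : ℕ} {x : X} {ε : ℝ} (hε : 0 < ε) :
    birkSum f ψ n x ≤ birkSupBall f ψ n x ε :=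
  le_csSup (bddAbove_birkSum_image hψ n _) (mem_image_of_mem _ (mem_bowenBall_self hε))

lemma eventually_birkSupBall_le (hψ : UniformContinuous ψ) {δ : ℝ} (hδ : 0 < δ) :
    ∀ᶠ ε in 𝓝[>] 0, ∀ (n : ℕ) (x : X), birkSupBall f ψ n x ε ≤ birkSum f ψ n x + n * δ := by
  obtain ⟨ε₀, hε₀, hψε₀⟩ := Metric.uniformContinuous_iff.mp hψ δ hδ
  filter_upwards [Ioo_mem_nhdsGT hε₀] with ε ⟨hε, hεε₀⟩ n x
  refine csSup_le ⟨_, mem_image_of_mem _ (mem_bowenBall_self hε)⟩ ?_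
  rintro _ ⟨y, hy, rfl⟩
  have hclose : ∀ j ∈ Finset.range n, ψ (nIter f j y) ≤ ψ (nIter f j x) + δ := fun j hj => by
    have := hψε₀ (((hy j (Finset.mem_range.mp hj)).trans hεε₀).trans_eq' (dist_comm _ _))
    linarith [(abs_lt.mp (Real.dist_eq _ _ ▸ this)).2]
  calc birkSum f ψ n y ≤ ∑ j ∈ Finset.range n, (ψ (nIter f j x) + δ) := Finset.sum_le_sum hclose
    _ = birkSum f ψ n x + n * δ := by simp [birkSum, Finset.sum_add_distrib]

end Dynamics

def criticalValue (F : ℝ → ℝ≥0∞) : EReal :=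
  sInf (Real.toEReal '' {α | F α = 0})

lemma criticalValue_le_add {F G : ℝ → ℝ≥0∞} {δ : ℝ} (h : ∀ α, G α = 0 → F (α + δ) = 0) :
    criticalValue F ≤ criticalValue G + δ := by
  rw [← EReal.sub_le_iff_le_add (.inl (EReal.coe_ne_bot δ)) (.inl (EReal.coe_ne_top δ))]
  refine le_sInf ?_
  rintro _ ⟨α, hα, rfl⟩
  refine EReal.sub_le_of_le_add' ?_
  calc criticalValue F ≤ ((α + δ : ℝ) : EReal) := sInf_le ⟨α + δ, h α hα, rfl⟩
    _ = δ + α := by rw [EReal.coe_add, add_comm]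

lemma criticalValue_iSup_le_add {F G : ℕ → ℝ → ℝ≥0∞} {δ : ℝ} (h : ∀ n α, F n (α + δ) ≤ G n α) :
    criticalValue (fun α => ⨆ n, F n α) ≤ criticalValue (fun α => ⨆ n, G n α) + δ :=
  criticalValue_le_add fun α hα => le_zero_iff.mp ((iSup_mono fun n => h n α).trans hα.le)

lemma criticalValue_iSup_mono {F G : ℕ → ℝ → ℝ≥0∞} (h : ∀ n α, F n α ≤ G n α) :
    criticalValue (fun α => ⨆ n, F n α) ≤ criticalValue (fun α => ⨆ n, G n α) := by
  simpa using criticalValue_iSup_le_add (δ := 0) (by simpa using h)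

lemma criticalValue_le_of_forall_pos {F : ℝ → ℝ≥0∞} {s : ℝ} (h : ∀ δ > 0, F (s + δ) = 0) :
    criticalValue F ≤ s := by
  refine EReal.le_of_forall_lt_iff_le.mp fun z hz => sInf_le ⟨z, ?_, rfl⟩
  simpa using h (z - s) (by simpa using EReal.coe_lt_coe_iff.mp hz)

section Covers

variable {X : Type} [MetricSpace X] {f : ℕ → X → X} {ψ : X → ℝ} {Z : Set X} {n : ℕ} {ε : ℝ}
  {w w' : ℕ → X → ℝ}

/-- `Mpre` and `MpreC`, with the exponent `-α n_i + S_{1,n_i}ψ(·)` replaced by `w n_i x_i`. -/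
def bowenCoverInf (f : ℕ → X → X) (Z : Set X) (n : ℕ) (ε : ℝ) (w : ℕ → X → ℝ) : ℝ≥0∞ :=
  sInf { S : ℝ≥0∞ | ∃ (u : Set ℕ) (c : ℕ → X) (m : ℕ → ℕ),
    (∀ i ∈ u, n ≤ m i) ∧ (Z ⊆ ⋃ i ∈ u, bowenBall f (m i) (c i) ε) ∧
    S = ∑' i : u, ENNReal.ofReal (Real.exp (w (m i) (c i))) }

/-- `Wpre`, with the exponent replaced by `w n_i x_i`. -/
def bowenWeightedCoverInf (f : ℕ → X → X) (Z : Set X) (n : ℕ) (ε : ℝ) (w : ℕ → X → ℝ) : ℝ≥0∞ :=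
  sInf { S : ℝ≥0∞ | ∃ (u : Set ℕ) (cx : ℕ → X) (m : ℕ → ℕ) (c : ℕ → ℝ),
    (∀ i ∈ u, 0 < c i) ∧ (∀ i ∈ u, n ≤ m i) ∧
    (∀ z ∈ Z, 1 ≤ ∑' i : u,
      (bowenBall f (m i) (cx i) ε).indicator (fun _ => ENNReal.ofReal (c i)) z) ∧
    S = ∑' i : u, ENNReal.ofReal (c i) * ENNReal.ofReal (Real.exp (w (m i) (cx i))) }

lemma bowenCoverInf_mono (hw : ∀ k x, w k x ≤ w' k x) :
    bowenCoverInf f Z n ε w ≤ bowenCoverInf f Z n ε w' := by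
  refine le_sInf ?_
  rintro _ ⟨u, c, m, hm, hZ, rfl⟩
  exact sInf_le_of_le ⟨u, c, m, hm, hZ, rfl⟩
    (ENNReal.tsum_le_tsum fun i => ENNReal.ofReal_le_ofReal (Real.exp_le_exp.mpr (hw _ _)))

lemma bowenCoverInf_anti_radius {ε' : ℝ} (h : ε ≤ ε') :
    bowenCoverInf f Z n ε' w ≤ bowenCoverInf f Z n ε w := by
  refine sInf_le_sInf ?_
  rintro _ ⟨u, c, m, hm, hZ, rfl⟩
  exact ⟨u, c, m, hm, hZ.trans (iUnion₂_mono fun i _ => bowenBall_mono h), rfl⟩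

lemma monotone_bowenCoverInf : Monotone fun n => bowenCoverInf f Z n ε w := by
  intro n n' h
  refine sInf_le_sInf ?_
  rintro _ ⟨u, c, m, hm, hZ, rfl⟩
  exact ⟨u, c, m, fun i hi => h.trans (hm i hi), hZ, rfl⟩

lemma bowenCoverInf_le_tsum [Nonempty X] {ι : Type*} [Countable ι] (c : ι → X) (m : ι → ℕ)
    (hm : ∀ i, n ≤ m i) (hZ : Z ⊆ ⋃ i, bowenBall f (m i) (c i) ε) :
    bowenCoverInf f Z n ε w ≤ ∑' i, ENNReal.ofReal (Real.exp (w (m i) (c i))) := by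
  obtain ⟨e, he⟩ := Countable.exists_injective_nat ι
  let c' := Function.extend e c fun _ => Classical.arbitrary X
  let m' := Function.extend e m fun _ => n
  have hc' (i : ι) : c' (e i) = c i := he.extend_apply _ _ i
  have hm' (i : ι) : m' (e i) = m i := he.extend_apply _ _ i
  refine sInf_le ⟨range e, c', m', ?_, ?_, ?_⟩
  · rintro _ ⟨i, rfl⟩
    exact (hm i).trans_eq (hm' i).symm
  · refine hZ.trans (iUnion_subset fun i => ?_)
    rw [← hc', ← hm']
    exact subset_biUnion_of_mem (u := fun k => bowenBall f (m' k) (c' k) ε) (mem_range_self i)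
  · rw [tsum_range (fun k => ENNReal.ofReal (Real.exp (w (m' k) (c' k)))) he]
    simp only [hc', hm']

lemma bowenWeightedCoverInf_mono (hw : ∀ k x, w k x ≤ w' k x) :
    bowenWeightedCoverInf f Z n ε w ≤ bowenWeightedCoverInf f Z n ε w' := by
  refine le_sInf ?_
  rintro _ ⟨u, cx, m, c, hc, hm, hZ, rfl⟩
  exact sInf_le_of_le ⟨u, cx, m, c, hc, hm, hZ, rfl⟩ (ENNReal.tsum_le_tsum fun i =>
    mul_le_mul_right (ENNReal.ofReal_le_ofReal (Real.exp_le_exp.mpr (hw _ _))) _)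

lemma bowenWeightedCoverInf_anti_radius {ε' : ℝ} (h : ε ≤ ε') :
    bowenWeightedCoverInf f Z n ε' w ≤ bowenWeightedCoverInf f Z n ε w := by
  refine sInf_le_sInf ?_
  rintro _ ⟨u, cx, m, c, hc, hm, hZ, rfl⟩
  refine ⟨u, cx, m, c, hc, hm, fun z hz => (hZ z hz).trans (ENNReal.tsum_le_tsum fun i => ?_), rfl⟩
  exact indicator_le_indicator_of_subset (bowenBall_mono h) (fun _ => zero_le) z

lemma bowenWeightedCoverInf_le_bowenCoverInf :
    bowenWeightedCoverInf f Z n ε w ≤ bowenCoverInf f Z n ε w := by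
  refine le_sInf ?_
  rintro _ ⟨u, c, m, hm, hZ, rfl⟩
  have hcover (z : X) (hz : z ∈ Z) : 1 ≤ ∑' i : u,
      (bowenBall f (m i) (c i) ε).indicator (fun _ => ENNReal.ofReal 1) z := by
    obtain ⟨i, hi, hzi⟩ := mem_iUnion₂.mp (hZ hz)
    refine le_trans ?_ (ENNReal.le_tsum (⟨i, hi⟩ : u))
    simp [indicator_of_mem hzi]
  exact sInf_le ⟨u, c, m, fun _ => 1, fun _ _ => one_pos, hm, hcover, by simp⟩

end Covers

lemma tendsto_nhdsGT_sSup_of_squeeze {g h : ℝ → EReal} (hg : Antitone g)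
    (hgh : ∀ ε > 0, g ε ≤ h ε) (hhg : ∀ δ : ℝ, 0 < δ → ∀ᶠ ε in 𝓝[>] 0, h ε ≤ g ε + δ) :
    Tendsto h (𝓝[>] 0) (𝓝 (sSup (g '' Ioi 0))) := by
  refine tendsto_order.mpr ⟨fun a ha => ?_, fun b hb => ?_⟩
  · filter_upwards [(tendsto_order.mp (hg.tendsto_nhdsGT 0)).1 a ha, self_mem_nhdsWithin]
      with ε hε hε₀
    exact hε.trans_le (hgh ε hε₀)
  · obtain ⟨c, hLc, hcb⟩ := EReal.exists_between_coe_real hb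
    obtain ⟨c', hcc', hc'b⟩ := EReal.exists_between_coe_real hcb
    filter_upwards [hhg (c' - c) (sub_pos.mpr (EReal.coe_lt_coe_iff.mp hcc')),
      self_mem_nhdsWithin] with ε hε hε₀
    calc h ε ≤ g ε + ((c' - c : ℝ) : EReal) := hε
      _ ≤ c + ((c' - c : ℝ) : EReal) := by
        gcongr
        exact (le_sSup (mem_image_of_mem g hε₀)).trans hLc.le
      _ = c' := by rw [← EReal.coe_add, add_sub_cancel]
      _ < b := hc'b

section Pressures

variable {X : Type} [MetricSpace X] {f : ℕ → X → X} {ψ : X → ℝ} {Z : Set X}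

/-- The weighted analogue of `PBCeps`. -/
def PWCeps (f : ℕ → X → X) (ψ : X → ℝ) (Z : Set X) (ε : ℝ) : EReal :=
  criticalValue fun α =>
    ⨆ n : ℕ, bowenWeightedCoverInf f Z n ε fun k x => -α * k + birkSum f ψ k x

lemma PBeps_eq_criticalValue (ε : ℝ) : PBeps f ψ Z ε = criticalValue fun α =>
    ⨆ n : ℕ, bowenCoverInf f Z n ε fun k x => -α * k + birkSupBall f ψ k x ε := rfl

lemma PWeps_eq_criticalValue (ε : ℝ) : PWeps f ψ Z ε = criticalValue fun α =>
    ⨆ n : ℕ, bowenWeightedCoverInf f Z n ε fun k x => -α * k + birkSupBall f ψ k x ε := rfl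

lemma PBCeps_eq_criticalValue (ε : ℝ) : PBCeps f ψ Z ε = criticalValue fun α =>
    ⨆ n : ℕ, bowenCoverInf f Z n ε fun k x => -α * k + birkSum f ψ k x := rfl

lemma antitone_PBCeps : Antitone (PBCeps f ψ Z) := fun _ _ h => by
  simp only [PBCeps_eq_criticalValue]
  exact criticalValue_iSup_mono fun _ _ => bowenCoverInf_anti_radius h

lemma antitone_PWCeps : Antitone (PWCeps f ψ Z) := fun _ _ h => by
  simp only [PWCeps]
  exact criticalValue_iSup_mono fun _ _ => bowenWeightedCoverInf_anti_radius h

lemma PWCeps_le_PBCeps (ε : ℝ) : PWCeps f ψ Z ε ≤ PBCeps f ψ Z ε := by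
  rw [PWCeps, PBCeps_eq_criticalValue]
  exact criticalValue_iSup_mono fun _ _ => bowenWeightedCoverInf_le_bowenCoverInf

lemma PBCeps_le_PBeps (hψ : BddAbove (range ψ)) {ε : ℝ} (hε : 0 < ε) :
    PBCeps f ψ Z ε ≤ PBeps f ψ Z ε := by
  rw [PBCeps_eq_criticalValue, PBeps_eq_criticalValue]
  exact criticalValue_iSup_mono fun _ _ => bowenCoverInf_mono fun k x => by
    linarith [birkSum_le_birkSupBall (f := f) hψ (n := k) (x := x) hε]

lemma PWCeps_le_PWeps (hψ : BddAbove (range ψ)) {ε : ℝ} (hε : 0 < ε) :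
    PWCeps f ψ Z ε ≤ PWeps f ψ Z ε := by
  rw [PWCeps, PWeps_eq_criticalValue]
  exact criticalValue_iSup_mono fun _ _ => bowenWeightedCoverInf_mono fun k x => by
    linarith [birkSum_le_birkSupBall (f := f) hψ (n := k) (x := x) hε]

lemma PBeps_le_PBCeps_add {ε δ : ℝ}
    (hmod : ∀ (n : ℕ) (x : X), birkSupBall f ψ n x ε ≤ birkSum f ψ n x + n * δ) :
    PBeps f ψ Z ε ≤ PBCeps f ψ Z ε + δ := by
  rw [PBCeps_eq_criticalValue, PBeps_eq_criticalValue]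
  exact criticalValue_iSup_le_add fun _ _ => bowenCoverInf_mono fun k x => by
    linarith [hmod k x]

lemma PWeps_le_PWCeps_add {ε δ : ℝ}
    (hmod : ∀ (n : ℕ) (x : X), birkSupBall f ψ n x ε ≤ birkSum f ψ n x + n * δ) :
    PWeps f ψ Z ε ≤ PWCeps f ψ Z ε + δ := by
  rw [PWCeps, PWeps_eq_criticalValue]
  exact criticalValue_iSup_le_add fun _ _ => bowenWeightedCoverInf_mono fun k x => by
    linarith [hmod k x]

lemma tendsto_PBeps (hψ : UniformContinuous ψ) (hψb : BddAbove (range ψ)) :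
    Tendsto (PBeps f ψ Z) (𝓝[>] 0) (𝓝 (sSup (PBCeps f ψ Z '' Ioi 0))) :=
  tendsto_nhdsGT_sSup_of_squeeze antitone_PBCeps (fun _ hε => PBCeps_le_PBeps hψb hε)
    fun _ hδ => (eventually_birkSupBall_le hψ hδ).mono fun _ => PBeps_le_PBCeps_add

lemma tendsto_PWeps (hψ : UniformContinuous ψ) (hψb : BddAbove (range ψ)) :
    Tendsto (PWeps f ψ Z) (𝓝[>] 0) (𝓝 (sSup (PWCeps f ψ Z '' Ioi 0))) :=
  tendsto_nhdsGT_sSup_of_squeeze antitone_PWCeps (fun _ hε => PWCeps_le_PWeps hψb hε)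
    fun _ hδ => (eventually_birkSupBall_le hψ hδ).mono fun _ => PWeps_le_PWCeps_add

lemma MpreC_le_geometric [Nonempty X] {E : ℕ → Set X} (hE : ∀ n, (E n).Countable)
    {t δ ε : ℝ} {N : ℕ}
    (hmass : ∀ n, ∑' x : E n, ENNReal.ofReal (Real.exp (birkSum f ψ n x - t * n)) ≤ 1)
    (hZ : Z ⊆ ⋃ k, ⋃ x ∈ E (k + N), bowenBall f (k + N) x ε) :
    MpreC f ψ Z N (t + δ) ε
      ≤ ENNReal.ofReal (Real.exp (-δ)) ^ N * (1 - ENNReal.ofReal (Real.exp (-δ)))⁻¹ := by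
  have (n : ℕ) : Countable (E n) := (hE n).to_subtype
  set r := ENNReal.ofReal (Real.exp (-δ))
  have hsplit (n : ℕ) (x : X) : ENNReal.ofReal (Real.exp (-(t + δ) * n + birkSum f ψ n x))
      = r ^ n * ENNReal.ofReal (Real.exp (birkSum f ψ n x - t * n)) := by
    rw [← ENNReal.ofReal_pow (Real.exp_pos _).le, ← ENNReal.ofReal_mul (by positivity),
      ← Real.exp_nat_mul, ← Real.exp_add]
    ring_nf
  have hcover : Z ⊆ ⋃ p : Σ k, E (k + N), bowenBall f (p.1 + N) p.2 ε := fun z hz => by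
    obtain ⟨k, hk⟩ := mem_iUnion.mp (hZ hz)
    obtain ⟨x, hx, hzx⟩ := mem_iUnion₂.mp hk
    exact mem_iUnion.mpr ⟨⟨k, x, hx⟩, hzx⟩
  calc MpreC f ψ Z N (t + δ) ε
      ≤ ∑' p : Σ k, E (k + N), ENNReal.ofReal
          (Real.exp (-(t + δ) * ↑(p.1 + N) + birkSum f ψ (p.1 + N) p.2)) :=
        bowenCoverInf_le_tsum (w := fun k x => -(t + δ) * k + birkSum f ψ k x)
          (fun p : Σ k, E (k + N) => (p.2 : X)) (fun p => p.1 + N) (fun _ => Nat.le_add_left _ _)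
          hcover
    _ = ∑' k, r ^ (k + N) * ∑' x : E (k + N),
          ENNReal.ofReal (Real.exp (birkSum f ψ (k + N) x - t * ↑(k + N))) := by
        simp only [ENNReal.tsum_sigma', hsplit, ENNReal.tsum_mul_left]
    _ ≤ ∑' k, r ^ (k + N) := ENNReal.tsum_le_tsum fun k => mul_le_of_le_one_right' (hmass _)
    _ = r ^ N * (1 - r)⁻¹ := by
        rw [← ENNReal.tsum_geometric, ← ENNReal.tsum_mul_left]
        simp only [pow_add, mul_comm]

end Pressures

lemma ofReal_exp_sub_mul_le_of_inv_mul_le {n : ℕ} (hn : 0 < n) {m : ℝ≥0∞} {S t : ℝ}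
    (h : (((n : ℝ)⁻¹ : ℝ) : EReal) * (-ENNReal.log m + S) ≤ t) :
    ENNReal.ofReal (Real.exp (S - t * n)) ≤ m := by
  have hn' : (0 : ℝ) < n := Nat.cast_pos.mpr hn
  rw [← EReal.exp_coe, ← ENNReal.exp_log m, EReal.exp_le_exp_iff]
  induction hlog : ENNReal.log m using EReal.rec with
  | bot =>
    rw [hlog, EReal.neg_bot, EReal.top_add_coe, EReal.coe_mul_top_of_pos (inv_pos.mpr hn')] at h
    exact absurd h (by simp)
  | coe a =>
    rw [hlog, ← EReal.coe_neg, ← EReal.coe_add, ← EReal.coe_mul, EReal.coe_le_coe_iff,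
      inv_mul_le_iff₀ hn'] at h
    exact EReal.coe_le_coe_iff.mpr (by linarith)
  | top => exact le_top

section LocalPressure

variable {f : ℕ → X → X} {ψ : X → ℝ} {μ : Measure X} {x : X}

def PlocEps (f : ℕ → X → X) (μ : Measure X) (ψ : X → ℝ) (x : X) (ε : ℝ) : EReal :=
  atTop.liminf fun n : ℕ =>
    (((n : ℝ)⁻¹ : ℝ) : EReal) *
      (-(ENNReal.log (μ (bowenBall f n x ε))) + ((birkSum f ψ n x : ℝ) : EReal))

lemma antitone_PlocEps : Antitone (PlocEps f μ ψ x) := fun _ _ h =>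
  liminf_le_liminf (Eventually.of_forall fun n =>
    mul_le_mul_of_nonneg_left
      (add_le_add_left (EReal.neg_le_neg_iff.mpr
        (ENNReal.log_monotone (measure_mono (bowenBall_mono h)))) _)
      (EReal.coe_nonneg.mpr (by positivity)))

lemma PlocEps_le_of_Ploc_le {s : ℝ} (h : Ploc f μ ψ x ≤ s) {ε : ℝ} (hε : 0 < ε) :
    PlocEps f μ ψ x ε ≤ s := by
  have hPloc : Ploc f μ ψ x = sSup (PlocEps f μ ψ x '' Ioi 0) :=
    (antitone_PlocEps.tendsto_nhdsGT 0).limUnder_eq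
  exact (le_sSup (mem_image_of_mem _ hε)).trans (hPloc ▸ h)

lemma frequently_ofReal_exp_le_measure_bowenBall {s ε δ : ℝ} (h : PlocEps f μ ψ x ε ≤ s)
    (hδ : 0 < δ) : ∃ᶠ n in atTop,
      ENNReal.ofReal (Real.exp (birkSum f ψ n x - (s + δ) * n)) ≤ μ (bowenBall f n x ε) :=
  ((frequently_lt_of_liminf_lt (h := h.trans_lt (EReal.coe_lt_coe_iff.mpr
    (lt_add_of_pos_right s hδ)))).and_eventually (eventually_gt_atTop 0)).mono
    fun _ ⟨hlt, hn⟩ => ofReal_exp_sub_mul_le_of_inv_mul_le hn hlt.le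

end LocalPressure

section Measure

variable [BorelSpace X] {f : ℕ → X → X} {ψ : X → ℝ} {Z : Set X}

lemma exists_countable_bowenBall_cover_tsum_le (hf : ∀ n, Continuous (f n)) (μ : Measure X)
    [SFinite μ] (n : ℕ) {ε : ℝ} (hε : 0 < ε) (A : Set X)
    (hA : ∀ x ∈ A, 0 < μ (bowenBall f n x ε)) :
    ∃ E ⊆ A, E.Countable ∧ A ⊆ ⋃ x ∈ E, bowenBall f n x (2 * ε) ∧
      ∑' x : E, μ (bowenBall f n x ε) ≤ μ univ := by
  obtain ⟨E, hEA, hdisj, hcov⟩ := Vitali.exists_disjoint_subfamily_covering_enlargement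
    (fun x => bowenBall f n x ε) A (fun _ => 1) 2 one_lt_two (fun _ _ => zero_le_one) 1
    (fun _ _ => le_rfl) fun x _ => ⟨x, mem_bowenBall_self hε⟩
  have hmeas (x : X) : MeasurableSet (bowenBall f n x ε) :=
    (isOpen_bowenBall hf n x ε).measurableSet
  have hE : E.Countable := by
    have := Measure.countable_meas_pos_of_disjoint_iUnion (μ := μ)
      (As := fun x : E => bowenBall f n x ε) (fun x => hmeas x)
      fun x y hxy => hdisj x.2 y.2 (Subtype.coe_injective.ne hxy)
    exact countable_coe_iff.mp
      (countable_univ_iff.mp (this.mono fun x _ => hA x (hEA x.2)))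
  refine ⟨E, hEA, hE, fun a ha => ?_, ?_⟩
  · obtain ⟨b, hb, ⟨z, hza, hzb⟩, -⟩ := hcov a ha
    exact mem_biUnion hb (mem_bowenBall_two_mul_of_mem_of_mem hza hzb)
  · rw [← measure_biUnion hE hdisj fun x _ => hmeas x]
    exact measure_mono (subset_univ _)

lemma MlimC_eq_zero_of_Ploc_le (hf : ∀ n, Continuous (f n)) (μ : Measure X)
    [IsProbabilityMeasure μ] {s : ℝ} (h : ∀ x ∈ Z, Ploc f μ ψ x ≤ s) {δ ε : ℝ} (hδ : 0 < δ)
    (hε : 0 < ε) : MlimC f ψ Z (s + δ + δ) (2 * ε) = 0 := by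
  have := nonempty_of_isProbabilityMeasure μ
  let A (n : ℕ) : Set X := {x ∈ Z |
    ENNReal.ofReal (Real.exp (birkSum f ψ n x - (s + δ) * n)) ≤ μ (bowenBall f n x ε)}
  choose E hEA hEc hEcover hEmass using fun n => exists_countable_bowenBall_cover_tsum_le hf μ n hε
    (A n) fun x hx => (ENNReal.ofReal_pos.mpr (Real.exp_pos _)).trans_le hx.2
  have hmass (n : ℕ) :
      ∑' x : E n, ENNReal.ofReal (Real.exp (birkSum f ψ n x - (s + δ) * n)) ≤ 1 :=
    (ENNReal.tsum_le_tsum fun x => (hEA n x.2).2).trans ((hEmass n).trans_eq measure_univ)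
  have hZ (N : ℕ) : Z ⊆ ⋃ k, ⋃ x ∈ E (k + N), bowenBall f (k + N) x (2 * ε) := fun z hz => by
    obtain ⟨n, hzn, hNn⟩ := ((frequently_ofReal_exp_le_measure_bowenBall
      (PlocEps_le_of_Ploc_le (h z hz) hε) hδ).and_eventually (eventually_ge_atTop N)).exists
    obtain ⟨k, rfl⟩ := Nat.exists_eq_add_of_le' hNn
    exact mem_iUnion.mpr ⟨k, hEcover _ ⟨hz, hzn⟩⟩
  have hr : ENNReal.ofReal (Real.exp (-δ)) < 1 :=
    ENNReal.ofReal_lt_one.mpr (Real.exp_lt_one_iff.mpr (neg_lt_zero.mpr hδ))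
  have hgeom : Tendsto (fun N => ENNReal.ofReal (Real.exp (-δ)) ^ N *
      (1 - ENNReal.ofReal (Real.exp (-δ)))⁻¹) atTop (𝓝 0) := by
    simpa using ENNReal.Tendsto.mul_const (ENNReal.tendsto_pow_atTop_nhds_zero_of_lt_one hr)
      (.inr (ENNReal.inv_ne_top.mpr (tsub_pos_of_lt hr).ne'))
  have htend : Tendsto (fun N => MpreC f ψ Z N (s + δ + δ) (2 * ε)) atTop (𝓝 0) :=
    tendsto_of_tendsto_of_tendsto_of_le_of_le tendsto_const_nhds hgeom (fun _ => zero_le)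
      fun N => MpreC_le_geometric hEc hmass (hZ N)
  have hmono : Monotone fun N => MpreC f ψ Z N (s + δ + δ) (2 * ε) :=
    monotone_bowenCoverInf (w := fun k x => -(s + δ + δ) * k + birkSum f ψ k x)
  rw [MlimC, iSup_eq_zero]
  exact fun N => le_zero_iff.mp (hmono.ge_of_tendsto htend N)

lemma PBCeps_le_of_Ploc_le (hf : ∀ n, Continuous (f n)) (μ : Measure X) [IsProbabilityMeasure μ]
    {s : ℝ} (h : ∀ x ∈ Z, Ploc f μ ψ x ≤ s) {ε : ℝ} (hε : 0 < ε) : PBCeps f ψ Z ε ≤ s := by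
  show criticalValue (fun α => MlimC f ψ Z α ε) ≤ s
  refine criticalValue_le_of_forall_pos fun δ hδ => ?_
  have := MlimC_eq_zero_of_Ploc_le hf μ h (half_pos hδ) (half_pos hε)
  rwa [add_assoc, add_halves, mul_div_cancel₀ _ two_ne_zero] at this

end Measure

/-- If the measure-theoretic local pressure satisfies `P_μ(x,ψ) ≤ s` for all
`x ∈ Z`, then the Pesin–Pitskel and weighted topological pressures of `Z` are at most `s`. -/
theorem statement0 [CompactSpace X] [BorelSpace X]
    (f : ℕ → X → X) (hf : ∀ n, Continuous (f n)) (ψ : X → ℝ) (hψ : Continuous ψ)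
    (μ : Measure X) [IsProbabilityMeasure μ] (Z : Set X) (s : ℝ)
    (h : ∀ x ∈ Z, Ploc f μ ψ x ≤ (s : EReal)) :
    PB f ψ Z ≤ (s : EReal) ∧ PW f ψ Z ≤ (s : EReal) := by
  have hψu := CompactSpace.uniformContinuous_of_continuous hψ
  have hψb := (isCompact_range hψ).bddAbove
  have hBC (ε : ℝ) (hε : ε ∈ Ioi 0) : PBCeps f ψ Z ε ≤ s := PBCeps_le_of_Ploc_le hf μ h hε
  constructor
  · rw [PB, (tendsto_PBeps hψu hψb).limUnder_eq]
    exact sSup_le (forall_mem_image.mpr hBC)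
  · rw [PW, (tendsto_PWeps hψu hψb).limUnder_eq]
    exact sSup_le (forall_mem_image.mpr fun ε hε => (PWCeps_le_PBCeps ε).trans (hBC ε hε))

end
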